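/- Let C : [0,1] → ℝ² be 1-Lipschitz, let 0 ≤ x₁ ≤ x ≤ x₂ ≤ 1, and let 0 < ε/2 < d. If closest-possible(x₁,x₂) ≥ d − ε/2 and ‖C(x)‖ > d + ε/2, then closest-possible(x₁,x) > d or closest-possible(x,x₂) > d. -/

import Mathlib

/-!
Suppose both `closestPossible C x₁ x` and `closestPossible C x x₂` are at most `d`, and pick
points `p`, `q` of the two ellipses of norm slightly above `d`. Since `‖C x‖ > d + ε / 2`, the
point `r` obtained by pulling `C x` radially inwards to norm just below `d - ε / 2` is no farther
than `C x` from `p` and from `q`. By the triangle inequality through `p` and `q`, `r` then lies in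
the ellipse of `(x₁, x₂)`, so `closestPossible C x₁ x₂ < d - ε / 2`.
-/

noncomputable def closestPossible (C : ℝ → EuclideanSpace ℝ (Fin 2)) (a b : ℝ) : ℝ :=
  sInf ((fun p => ‖p‖) '' {p : EuclideanSpace ℝ (Fin 2) | ‖C a - p‖ + ‖C b - p‖ ≤ b - a})

open scoped RealInnerProductSpace

section Geometry

variable {E : Type*} [NormedAddCommGroup E] [InnerProductSpace ℝ E]

/-- The hypothesis `hd` says that the midpoint of `z` and `l • z` lies outside the ball of
radius `d`. -/
lemma norm_sub_smul_le_norm_sub {p z : E} {d l : ℝ} (hp : ‖p‖ ≤ d) (hl₀ : 0 ≤ l) (hl₁ : l ≤ 1)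
    (hd : 2 * d ≤ (1 + l) * ‖z‖) : ‖p - l • z‖ ≤ ‖p - z‖ := by
  have hinner : ⟪p, z⟫ ≤ d * ‖z‖ :=
    (real_inner_le_norm p z).trans (mul_le_mul_of_nonneg_right hp (norm_nonneg z))
  -- `‖p - z‖² - ‖p - l • z‖² = (1 - l) ((1 + l) ‖z‖² - 2 ⟪p, z⟫)`
  have hsq : ‖p - l • z‖ ^ 2 ≤ ‖p - z‖ ^ 2 := by
    rw [norm_sub_sq_real, norm_sub_sq_real, real_inner_smul_right, norm_smul,
      Real.norm_eq_abs, abs_of_nonneg hl₀]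
    nlinarith [mul_nonneg (sub_nonneg.2 hl₁) (norm_nonneg z)]
  exact pow_le_pow_iff_left₀ (norm_nonneg _) (norm_nonneg _) two_ne_zero |>.1 hsq

end Geometry

section Ellipse

variable {E : Type*} [NormedAddCommGroup E]

def ellipse (C : ℝ → E) (a b : ℝ) : Set E :=
  {p | ‖C a - p‖ + ‖C b - p‖ ≤ b - a}

lemma left_mem_ellipse {C : ℝ → E} {a b : ℝ} (hab : a ≤ b) (hC : ‖C b - C a‖ ≤ |b - a|) :
    C a ∈ ellipse C a b := by
  simpa [ellipse, abs_of_nonneg (sub_nonneg.2 hab)] using hC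

lemma mem_ellipse_of_dist_le {C : ℝ → E} {x₁ x x₂ : ℝ} {p q r : E}
    (hp : p ∈ ellipse C x₁ x) (hq : q ∈ ellipse C x x₂)
    (hpr : ‖p - r‖ ≤ ‖p - C x‖) (hqr : ‖q - r‖ ≤ ‖q - C x‖) :
    r ∈ ellipse C x₁ x₂ := by
  have h₁ : ‖C x₁ - r‖ ≤ ‖C x₁ - p‖ + ‖p - r‖ := norm_sub_le_norm_sub_add_norm_sub _ _ _
  have h₂ : ‖C x₂ - r‖ ≤ ‖C x₂ - q‖ + ‖q - r‖ := norm_sub_le_norm_sub_add_norm_sub _ _ _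
  rw [norm_sub_rev p (C x)] at hpr
  rw [norm_sub_rev q (C x)] at hqr
  simp only [ellipse, Set.mem_ofPred_eq] at hp hq ⊢
  linarith

end Ellipse

lemma bddBelow_norm_image (s : Set (EuclideanSpace ℝ (Fin 2))) : BddBelow ((‖·‖) '' s) :=
  ⟨0, by rintro _ ⟨p, -, rfl⟩; exact norm_nonneg p⟩

lemma closestPossible_le_norm {C : ℝ → EuclideanSpace ℝ (Fin 2)} {a b : ℝ}
    {p : EuclideanSpace ℝ (Fin 2)} (hp : p ∈ ellipse C a b) : closestPossible C a b ≤ ‖p‖ :=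
  csInf_le (bddBelow_norm_image _) ⟨p, hp, rfl⟩

lemma exists_mem_ellipse_norm_lt {C : ℝ → EuclideanSpace ℝ (Fin 2)} {a b d : ℝ}
    (hne : (ellipse C a b).Nonempty) (hd : closestPossible C a b < d) :
    ∃ p ∈ ellipse C a b, ‖p‖ < d := by
  obtain ⟨-, ⟨p, hp, rfl⟩, hpd⟩ := (csInf_lt_iff (bddBelow_norm_image _) (hne.image _)).1 hd
  exact ⟨p, hp, hpd⟩

/-- A strict form of the Ellipse Lemma. -/
lemma closestPossible_le_of_lt {C : ℝ → EuclideanSpace ℝ (Fin 2)} {x₁ x x₂ d s : ℝ}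
    (hne₁ : (ellipse C x₁ x).Nonempty) (hne₂ : (ellipse C x x₂).Nonempty)
    (h₁ : closestPossible C x₁ x < d) (h₂ : closestPossible C x x₂ < d)
    (hs₀ : 0 ≤ s) (hs : s ≤ ‖C x‖) (hd : 2 * d ≤ ‖C x‖ + s) :
    closestPossible C x₁ x₂ ≤ s := by
  obtain ⟨p, hp, hpd⟩ := exists_mem_ellipse_norm_lt hne₁ h₁
  obtain ⟨q, hq, hqd⟩ := exists_mem_ellipse_norm_lt hne₂ h₂
  have hCx : 0 < ‖C x‖ := by linarith [norm_nonneg p]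
  set l := s / ‖C x‖
  have hl₀ : 0 ≤ l := div_nonneg hs₀ hCx.le
  have hl₁ : l ≤ 1 := (div_le_one hCx).2 hs
  have hl : (1 + l) * ‖C x‖ = ‖C x‖ + s := by rw [add_mul, one_mul, div_mul_cancel₀ _ hCx.ne']
  have hmem : l • C x ∈ ellipse C x₁ x₂ :=
    mem_ellipse_of_dist_le hp hq
      (norm_sub_smul_le_norm_sub hpd.le hl₀ hl₁ (by linarith))
      (norm_sub_smul_le_norm_sub hqd.le hl₀ hl₁ (by linarith))
  calc closestPossible C x₁ x₂ ≤ ‖l • C x‖ := closestPossible_le_norm hmem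
    _ = s := by rw [norm_smul, Real.norm_of_nonneg hl₀, div_mul_cancel₀ _ hCx.ne']

theorem stmt_6 (C : ℝ → EuclideanSpace ℝ (Fin 2))
    (hC : ∀ a ∈ Set.Icc (0:ℝ) 1, ∀ b ∈ Set.Icc (0:ℝ) 1, ‖C a - C b‖ ≤ |a - b|)
    (x₁ x x₂ : ℝ) (h0 : 0 ≤ x₁) (h1 : x₁ ≤ x) (h2 : x ≤ x₂) (h3 : x₂ ≤ 1)
    (ε d : ℝ) (hε : 0 < ε / 2) (hεd : ε / 2 < d)
    (hcp : closestPossible C x₁ x₂ ≥ d - ε / 2) (hx : ‖C x‖ > d + ε / 2) :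
    closestPossible C x₁ x > d ∨ closestPossible C x x₂ > d := by
  by_contra! hle
  have hne₁ : (ellipse C x₁ x).Nonempty :=
    ⟨_, left_mem_ellipse h1 (hC x ⟨by linarith, by linarith⟩ x₁ ⟨h0, by linarith⟩)⟩
  have hne₂ : (ellipse C x x₂).Nonempty :=
    ⟨_, left_mem_ellipse h2 (hC x₂ ⟨by linarith, h3⟩ x ⟨by linarith, by linarith⟩)⟩
  obtain ⟨s, hs, hsd⟩ :=
    exists_between (max_lt (by linarith) (by linarith) : max (2 * d - ‖C x‖) 0 < d - ε / 2)
  rw [max_lt_iff] at hs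
  have hcp' : closestPossible C x₁ x₂ ≤ s :=
    closestPossible_le_of_lt (d := (‖C x‖ + s) / 2) hne₁ hne₂
      (by linarith [hle.1]) (by linarith [hle.2]) hs.2.le (by linarith) (by linarith)
  linarith
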